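/- arXiv:1707.01548 — 2 statements merged into one kernel-verified Lean document; each statement's English description precedes it below -/
import Mathlib

section
/- The sequence C_n/n is non-increasing along even indices and non-decreasing along odd indices: for every even integer n ≥ 4, C_{n+2}/(n+2) ≤ C_n/n, and for every odd integer n ≥ 3, C_{n+2}/(n+2) ≥ C_n/n. -/
/-!
With `P n = Σ_{k<n} (-2)^k/k!`, the increment `L_{n+1} - L_n` is the alternating sum
`Σ_{k=1}^{n+1} (-1)^{k+1} 2^{k-1}/k! = (1 - P (n+2))/2`, which gives the closed form
`L_n = (n+1)(1 - P (n+1))/2 - P n`. In `C_{n+2}/(n+2) - C_n/n` everything then cancels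
except a single term `2 (-2)^{n-3} / ((n-1) (n-3)! n (n+2))`, whose sign is `(-1)^{n-1}`.
-/

/-- `Lseg n = Σ_{k=1}^{n} (−1)^{k+1} (2^{k−1}/k!) (n−k+1)`, the expected number of
transmissions in one slot from a fully occupied segment of `n` nodes (so `Lseg 0 = 0`). -/
noncomputable def Lseg (n : ℕ) : ℝ :=
  ∑ k ∈ Finset.Icc 1 n,
    (-1 : ℝ) ^ (k + 1) * (2 ^ (k - 1) / (Nat.factorial k : ℝ)) * ((n : ℝ) - (k : ℝ) + 1)

/-- `C_k = 1 + L_{k−3}`, the expected number of transmissions in one slot from a fully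
occupied circle of `k ≥ 3` nodes. -/
noncomputable def Ccirc (k : ℕ) : ℝ := 1 + Lseg (k - 3)

open Finset Nat

noncomputable def expPartialSum (x : ℝ) (n : ℕ) : ℝ := ∑ k ∈ range n, x ^ k / (k ! : ℝ)

theorem expPartialSum_succ (x : ℝ) (n : ℕ) :
    expPartialSum x (n + 1) = expPartialSum x n + x ^ n / (n ! : ℝ) :=
  sum_range_succ _ n

theorem expPartialSum_add_two (x : ℝ) (n : ℕ) :
    expPartialSum x (n + 2) =
      expPartialSum x n + x ^ n / (n ! : ℝ) * (1 + x / ((n : ℝ) + 1)) := by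
  rw [expPartialSum_succ, expPartialSum_succ, factorial_succ, pow_succ]
  push_cast
  field_simp
  ring

theorem alternating_sum_eq_expPartialSum (n : ℕ) :
    ∑ k ∈ Icc 1 n, (-1 : ℝ) ^ (k + 1) * (2 ^ (k - 1) / (k ! : ℝ)) =
      (1 - expPartialSum (-2) (n + 1)) / 2 := by
  induction n with
  | zero => simp [expPartialSum]
  | succ n ih =>
    rw [sum_Icc_succ_top (by omega), ih, expPartialSum_succ (-2) (n + 1), add_tsub_cancel_right,
      neg_pow (2 : ℝ), pow_succ (2 : ℝ) n, pow_succ (-1 : ℝ) (n + 1)]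
    field_simp
    ring

theorem Lseg_succ (n : ℕ) :
    Lseg (n + 1) = Lseg n + ∑ k ∈ Icc 1 (n + 1), (-1 : ℝ) ^ (k + 1) * (2 ^ (k - 1) / (k ! : ℝ)) := by
  rw [Lseg, Lseg, sum_Icc_succ_top (by omega), sum_Icc_succ_top (by omega), ← add_assoc,
    ← sum_add_distrib]
  push_cast
  congr 1
  · exact sum_congr rfl fun k _ => by ring
  · ring

theorem Lseg_eq (n : ℕ) :
    Lseg n = ((n : ℝ) + 1) * (1 - expPartialSum (-2) (n + 1)) / 2 - expPartialSum (-2) n := by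
  induction n with
  | zero => simp [Lseg, expPartialSum]
  | succ n ih =>
    rw [Lseg_succ, ih, alternating_sum_eq_expPartialSum, expPartialSum_add_two,
      expPartialSum_succ]
    push_cast
    field_simp
    ring

theorem Ccirc_div_sub_Ccirc_div (m : ℕ) :
    Ccirc (m + 5) / ((m : ℝ) + 5) - Ccirc (m + 3) / ((m : ℝ) + 3) =
      2 * (-2 : ℝ) ^ m / (((m : ℝ) + 2) * (m ! : ℝ) * ((m : ℝ) + 3) * ((m : ℝ) + 5)) := by
  rw [Ccirc, Ccirc, show m + 5 - 3 = m + 2 by omega, add_tsub_cancel_right, Lseg_eq, Lseg_eq,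
    expPartialSum_succ (-2) (m + 2), expPartialSum_add_two, expPartialSum_succ (-2) m,
    factorial_succ, factorial_succ, pow_succ, pow_succ]
  push_cast
  field_simp
  ring

/-- `C_n/n` is non-increasing along even indices `n ≥ 4` and non-decreasing along odd
indices `n ≥ 3`. -/
theorem Ccirc_div_monotone (n : ℕ) :
    (4 ≤ n → Even n → Ccirc (n + 2) / ((n : ℝ) + 2) ≤ Ccirc n / (n : ℝ)) ∧
    (3 ≤ n → Odd n → Ccirc (n + 2) / ((n : ℝ) + 2) ≥ Ccirc n / (n : ℝ)) := by
  refine ⟨fun hn hev => ?_, fun hn hodd => ?_⟩ <;>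
    obtain ⟨m, rfl⟩ : ∃ m, n = m + 3 := ⟨n - 3, by omega⟩ <;>
    rw [show m + 3 + 2 = m + 5 by omega] <;>
    push_cast <;>
    rw [show (m : ℝ) + 3 + 2 = m + 5 by ring]
  · have hm : Odd m := by simpa [parity_simps] using hev
    rw [← sub_nonpos, Ccirc_div_sub_Ccirc_div]
    have := hm.pow_neg (show (-2 : ℝ) < 0 by norm_num)
    exact div_nonpos_of_nonpos_of_nonneg (by linarith) (by positivity)
  · have hm : Even m := by simpa [parity_simps] using hodd
    rw [ge_iff_le, ← sub_nonneg, Ccirc_div_sub_Ccirc_div]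
    have := hm.pow_nonneg (-2 : ℝ)
    positivity
end

section
/- The parking (jamming) density converges to (1 − e^{−2})/2: the sequence L_n/n tends to (1 − e^{−2})/2 as n → ∞. -/
/-!
Reindexing by `j = k - 1`, `Lseg n = Σ_{j<n} b_j (n - j)` with `b_j = (-2)^j/(j+1)!`.
The weighted sum `Σ_{j<n} b_j (n - j)` is the sum of the first `n` partial sums of `Σ b_j`,
so `Lseg n / n` is a Cesàro mean of those partial sums and converges to
`Σ_j (-2)^j/(j+1)! = (e^{-2} - 1)/(-2)`.
-/

open Filter Finset Topology

theorem Finset.sum_range_mul_sub_eq_sum_range_sum_range {R : Type*} [CommRing R] (b : ℕ → R)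
    (n : ℕ) : ∑ j ∈ range n, b j * ((n : R) - j) = ∑ m ∈ range n, ∑ j ∈ range (m + 1), b j := by
  induction n with
  | zero => simp
  | succ n ih =>
    have hweight (j : ℕ) : b j * ((n : R) + 1 - j) = b j * ((n : R) - j) + b j := by ring
    simp only [sum_range_succ _ n, ← ih, Nat.cast_succ, hweight, sum_add_distrib]
    ring

theorem HasSum.tendsto_sum_range_mul_sub_div {b : ℕ → ℝ} {s : ℝ} (hb : HasSum b s) :
    Tendsto (fun n : ℕ => (∑ j ∈ range n, b j * ((n : ℝ) - j)) / n) atTop (𝓝 s) := by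
  have hpartial : Tendsto (fun m => ∑ j ∈ range (m + 1), b j) atTop (𝓝 s) :=
    (tendsto_add_atTop_iff_nat 1).mpr hb.tendsto_sum_nat
  simpa only [sum_range_mul_sub_eq_sum_range_sum_range, div_eq_inv_mul] using hpartial.cesaro

theorem Real.hasSum_pow_div_factorial_succ {x : ℝ} (hx : x ≠ 0) :
    HasSum (fun j : ℕ => x ^ j / (j + 1).factorial) ((Real.exp x - 1) / x) := by
  have hexp : HasSum (fun k : ℕ => x ^ k / k.factorial) (Real.exp x) := by
    rw [Real.exp_eq_exp_ℝ]
    exact NormedSpace.expSeries_div_hasSum_exp x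
  have htail := (hasSum_nat_add_iff' 1).mpr hexp
  simp only [range_one, sum_singleton, pow_zero, Nat.factorial_zero, Nat.cast_one,
    div_one] at htail
  refine (htail.div_const x).congr_fun fun j => ?_
  field_simp
  ring

theorem Lseg_eq_sum_range (n : ℕ) :
    Lseg n = ∑ j ∈ range n, (-2 : ℝ) ^ j / (j + 1).factorial * ((n : ℝ) - j) := by
  rw [Lseg, ← Ico_add_one_right_eq_Icc, sum_Ico_eq_sum_range, Nat.add_sub_cancel]
  refine sum_congr rfl fun j _ => ?_
  rw [add_comm 1 j, Nat.add_sub_cancel, neg_pow (2 : ℝ)]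
  push_cast
  ring

/-- The parking (jamming) density converges: `L_n/n → (1 − e^{−2})/2` as `n → ∞`. -/
theorem Lseg_div_tendsto :
    Filter.Tendsto (fun n : ℕ => Lseg n / (n : ℝ)) Filter.atTop
      (nhds ((1 - Real.exp (-2)) / 2)) := by
  have hsum := Real.hasSum_pow_div_factorial_succ (x := -2) (by norm_num)
  rw [show (Real.exp (-2) - 1) / -2 = (1 - Real.exp (-2)) / 2 by ring] at hsum
  simpa only [Lseg_eq_sum_range] using hsum.tendsto_sum_range_mul_sub_div
end
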